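/- arXiv:math/9308203 — 2 statements merged into one kernel-verified Lean document; each statement's English description precedes it below -/
import Mathlib

section
/- If I is a pleasant ideal on κ and there exists a thin set S ∈ I*, then I is quasinormal, and hence normal. -/
open Set

namespace PaperIdeals

/-- Diagonal union of a family `X` indexed by a set `A` of ordinals. -/
def diagU (A : Set Ordinal.{0}) (X : Ordinal.{0} → Set Ordinal.{0}) : Set Ordinal.{0} :=
  {ξ | ∃ α < ξ, α ∈ A ∧ ξ ∈ X α}

/-- `X` is bounded below `κ`. -/
def BddIn (κ : Cardinal.{0}) (X : Set Ordinal.{0}) : Prop := ∃ θ < κ.ord, X ⊆ Iio θ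

/-- `J` is a `<κ`-complete ideal on `κ` containing all singletons,
closed under subsets and (finite and small) unions. -/
def IsIdeal (κ : Cardinal.{0}) (J : Set Ordinal.{0} → Prop) : Prop :=
  (∀ X, J X → X ⊆ Iio κ.ord) ∧
  (∀ X Y, J X → Y ⊆ X → J Y) ∧
  (∀ X Y, J X → J Y → J (X ∪ Y)) ∧
  (∀ ξ < κ.ord, J {ξ}) ∧
  (∀ θ : Ordinal.{0}, θ.card < κ → ∀ X : Ordinal.{0} → Set Ordinal.{0},
    (∀ α, J (X α)) → J (⋃ α ∈ Iio θ, X α))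

def Proper (κ : Cardinal.{0}) (J : Set Ordinal.{0} → Prop) : Prop := ¬ J (Iio κ.ord)

/-- The coideal `I⁺`. -/
def Pos (κ : Cardinal.{0}) (J : Set Ordinal.{0} → Prop) (X : Set Ordinal.{0}) : Prop :=
  X ⊆ Iio κ.ord ∧ ¬ J X

/-- The dual filter `I*`. -/
def Dual (κ : Cardinal.{0}) (J : Set Ordinal.{0} → Prop) (X : Set Ordinal.{0}) : Prop :=
  X ⊆ Iio κ.ord ∧ J (Iio κ.ord \ X)

/-- The restriction `I ↾ A`. -/
def restrict (κ : Cardinal.{0}) (J : Set Ordinal.{0} → Prop) (A : Set Ordinal.{0})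
    (X : Set Ordinal.{0}) : Prop :=
  X ⊆ Iio κ.ord ∧ J (X ∩ A)

/-- Pleasant: closed under diagonal unions indexed by sets in the ideal. -/
def Pleasant (J : Set Ordinal.{0} → Prop) : Prop :=
  ∀ A, J A → ∀ X : Ordinal.{0} → Set Ordinal.{0}, (∀ α, J (X α)) → J (diagU A X)

/-- Prepleasant: closed under diagonal unions of bounded sets indexed by sets in the ideal. -/
def Prepleasant (κ : Cardinal.{0}) (J : Set Ordinal.{0} → Prop) : Prop :=
  ∀ Q, J Q → ∀ B : Ordinal.{0} → Set Ordinal.{0}, (∀ α, BddIn κ (B α)) → J (diagU Q B)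

/-- Normal: closed under full `κ`-indexed diagonal unions. -/
def Normal (κ : Cardinal.{0}) (J : Set Ordinal.{0} → Prop) : Prop :=
  ∀ X : Ordinal.{0} → Set Ordinal.{0}, (∀ α, J (X α)) → J (diagU (Iio κ.ord) X)

/-- Quasinormal ideal. -/
def Quasinormal (κ : Cardinal.{0}) (J : Set Ordinal.{0} → Prop) : Prop :=
  ∀ X : Ordinal.{0} → Set Ordinal.{0}, (∀ α, J (X α)) →
    ∃ Q, Dual κ J Q ∧ J (diagU Q X)

/-- Club subset of `κ`: unbounded in `κ.ord` and closed under limits. -/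
def IsClubIn (κ : Cardinal.{0}) (C : Set Ordinal.{0}) : Prop :=
  C ⊆ Iio κ.ord ∧ (∀ α < κ.ord, ∃ β ∈ C, α < β) ∧
  (∀ δ < κ.ord, Order.IsSuccLimit δ → (∀ α < δ, ∃ β ∈ C, α < β ∧ β < δ) → δ ∈ C)

/-- Stationary subset of `κ`. -/
def StatIn (κ : Cardinal.{0}) (S : Set Ordinal.{0}) : Prop :=
  S ⊆ Iio κ.ord ∧ ∀ C, IsClubIn κ C → (S ∩ C).Nonempty

/-- The nonstationary ideal `NS κ`. -/
def NS (κ : Cardinal.{0}) (X : Set Ordinal.{0}) : Prop :=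
  X ⊆ Iio κ.ord ∧ ∃ C, IsClubIn κ C ∧ X ∩ C = ∅

/-- Membership in the ideal generated by a family `S`. -/
def genIdeal (κ : Cardinal.{0}) (S : Set Ordinal.{0} → Prop) (X : Set Ordinal.{0}) : Prop :=
  ∀ K, IsIdeal κ K → (∀ Y, S Y → K Y) → K X

/-- Membership in the pleasant closure of `S` (smallest pleasant ideal containing `S`). -/
def PClosure (κ : Cardinal.{0}) (S : Set Ordinal.{0} → Prop) (X : Set Ordinal.{0}) : Prop :=
  ∀ K, IsIdeal κ K → Pleasant K → (∀ Y, S Y → K Y) → K X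

/-- Membership in the prepleasant closure of `S`. -/
def PPClosure (κ : Cardinal.{0}) (S : Set Ordinal.{0} → Prop) (X : Set Ordinal.{0}) : Prop :=
  ∀ K, IsIdeal κ K → Prepleasant κ K → (∀ Y, S Y → K Y) → K X

/-- p-point. -/
def PPoint (κ : Cardinal.{0}) (J : Set Ordinal.{0} → Prop) : Prop :=
  ∀ f : Ordinal.{0} → Ordinal.{0}, (∀ ξ : Ordinal.{0}, J {α | α < κ.ord ∧ f α = ξ}) →
    ∃ X, Dual κ J X ∧ ∀ ξ : Ordinal.{0}, BddIn κ {α | α ∈ X ∧ f α = ξ}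

/-- q-point. -/
def QPoint (κ : Cardinal.{0}) (J : Set Ordinal.{0} → Prop) : Prop :=
  ∀ f : Ordinal.{0} → Ordinal.{0}, (∀ ξ : Ordinal.{0}, BddIn κ {α | α < κ.ord ∧ f α = ξ}) →
    ∃ X, Dual κ J X ∧ Set.InjOn f X

/-- `L = {λ + 1 : λ < κ a limit ordinal}`. -/
def LSet (κ : Cardinal.{0}) : Set Ordinal.{0} :=
  {x | ∃ lam : Ordinal.{0}, Order.IsSuccLimit lam ∧ x = lam + 1 ∧ x < κ.ord}

/-- `B(Y) = {α - 1 : α ∈ Y}` for a set `Y` of successor ordinals. -/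
def BSet (Y : Set Ordinal.{0}) : Set Ordinal.{0} := {γ | γ + 1 ∈ Y}

/-- `W = {λ < κ : cof λ = ω}`. -/
def WSet (κ : Cardinal.{0}) : Set Ordinal.{0} :=
  {lam | lam < κ.ord ∧ lam.cof = Cardinal.aleph0}

/-- Węglorz's ideal `J_κ`. -/
def Weglorz (κ : Cardinal.{0}) (X : Set Ordinal.{0}) : Prop :=
  X ⊆ Iio κ.ord ∧ ∃ (f : Ordinal.{0} → Ordinal.{0}) (θ : Cardinal.{0}), θ < κ ∧
    (∀ α ∈ X, α ≠ 0 → f α < α) ∧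
    ∀ ξ : Ordinal.{0}, Cardinal.mk {α : Ordinal.{0} // α ∈ X ∧ f α = ξ} ≤ Cardinal.lift.{1} θ

namespace IsIdeal

variable {κ : Cardinal.{0}} {J : Set Ordinal.{0} → Prop}

theorem subset_Iio (hJ : IsIdeal κ J) {X : Set Ordinal.{0}} (hX : J X) : X ⊆ Iio κ.ord :=
  hJ.1 X hX

theorem mono (hJ : IsIdeal κ J) {X Y : Set Ordinal.{0}} (hX : J X) (hYX : Y ⊆ X) : J Y :=
  hJ.2.1 X Y hX hYX

theorem union (hJ : IsIdeal κ J) {X Y : Set Ordinal.{0}} (hX : J X) (hY : J Y) : J (X ∪ Y) :=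
  hJ.2.2.1 X Y hX hY

end IsIdeal

theorem diagU_mono {A B : Set Ordinal.{0}} (hAB : A ⊆ B) (X : Ordinal.{0} → Set Ordinal.{0}) :
    diagU A X ⊆ diagU B X := by
  rintro ξ ⟨α, hαξ, hαA, hξX⟩
  exact ⟨α, hαξ, hAB hαA, hξX⟩

theorem diagU_union (A B : Set Ordinal.{0}) (X : Ordinal.{0} → Set Ordinal.{0}) :
    diagU (A ∪ B) X = diagU A X ∪ diagU B X := by
  ext ξ
  simp only [diagU, mem_ofPred_eq, mem_union]
  grind

/-- Moving each index `α` to `α + 1` loses only the points `ξ = α + 1`, which lie in `T`. -/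
theorem diagU_subset_diagU_pred_union {θ : Ordinal.{0}} {A T : Set Ordinal.{0}}
    {X : Ordinal.{0} → Set Ordinal.{0}} (hX : ∀ α, X α ⊆ Iio θ)
    (hT : ∀ α ∈ A, α + 1 < θ → α + 1 ∈ T) :
    diagU A X ⊆ diagU T (fun β => X (Ordinal.pred β)) ∪ T := by
  rintro ξ ⟨α, hαξ, hαA, hξX⟩
  have hsucc_T : α + 1 ∈ T := hT α hαA ((Order.add_one_le_iff.mpr hαξ).trans_lt (hX α hξX))
  rcases (Order.add_one_le_iff.mpr hαξ).lt_or_eq with hlt | rfl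
  · exact Or.inl ⟨α + 1, hlt, hsucc_T, by simpa only [Ordinal.pred_add_one] using hξX⟩
  · exact Or.inr hsucc_T

section Pleasant

variable {κ : Cardinal.{0}} {J : Set Ordinal.{0} → Prop}

/-- The complement `T` of a thin `S ∈ I*` contains `α + 1` for every `α ∈ S`, so a diagonal union
over `S` is, up to `T`, a diagonal union over `T ∈ I`. -/
theorem Pleasant.diagU_mem_of_thin (hJ : IsIdeal κ J) (hpl : Pleasant J) {S : Set Ordinal.{0}}
    (hthin : ∀ α ∈ S, α + 1 ∉ S) (hS : Dual κ J S) {X : Ordinal.{0} → Set Ordinal.{0}}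
    (hX : ∀ α, J (X α)) : J (diagU S X) := by
  have hsucc : ∀ α ∈ S, α + 1 < κ.ord → α + 1 ∈ Iio κ.ord \ S :=
    fun α hα hlt => ⟨hlt, hthin α hα⟩
  refine hJ.mono (hJ.union (hpl _ hS.2 _ fun β => hX (Ordinal.pred β)) hS.2) ?_
  exact diagU_subset_diagU_pred_union (fun α => hJ.subset_Iio (hX α)) hsucc

theorem Pleasant.quasinormal_of_thin (hJ : IsIdeal κ J) (hpl : Pleasant J) {S : Set Ordinal.{0}}
    (hthin : ∀ α ∈ S, α + 1 ∉ S) (hS : Dual κ J S) : Quasinormal κ J :=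
  fun _ hX => ⟨S, hS, hpl.diagU_mem_of_thin hJ hthin hS hX⟩

theorem Pleasant.normal_of_quasinormal (hJ : IsIdeal κ J) (hpl : Pleasant J)
    (hq : Quasinormal κ J) : Normal κ J := by
  intro X hX
  obtain ⟨Q, hQ, hQX⟩ := hq X hX
  have hsplit : Iio κ.ord ⊆ Q ∪ (Iio κ.ord \ Q) := by
    rw [union_sdiff_self]
    exact subset_union_right
  refine hJ.mono (hJ.union hQX (hpl _ hQ.2 X hX)) ?_
  rw [← diagU_union]
  exact diagU_mono hsplit X

end Pleasant

theorem stmt15_general (κ : Cardinal.{0})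
    (J : Set Ordinal.{0} → Prop) (hJ : IsIdeal κ J)
    (hpl : Pleasant J) (S : Set Ordinal.{0}) (hthin : ∀ α ∈ S, α + 1 ∉ S)
    (hS : Dual κ J S) :
    Quasinormal κ J ∧ Normal κ J := by
  have hq : Quasinormal κ J := hpl.quasinormal_of_thin hJ hthin hS
  exact ⟨hq, hpl.normal_of_quasinormal hJ hq⟩

/-- If `I` is pleasant and there is a thin set `S ∈ I*`, then `I` is
quasinormal, and hence normal. -/
theorem stmt15 (κ : Cardinal.{0}) (hreg : κ.IsRegular) (hunc : Cardinal.aleph0 < κ)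
    (J : Set Ordinal.{0} → Prop) (hJ : IsIdeal κ J) (hprop : Proper κ J)
    (hpl : Pleasant J) (S : Set Ordinal.{0}) (hthin : ∀ α ∈ S, α + 1 ∉ S)
    (hS : Dual κ J S) :
    Quasinormal κ J ∧ Normal κ J :=
  stmt15_general κ J hJ hpl S hthin hS

end PaperIdeals
end

section
/- Suppose I ⊆ NS_κ and L = {λ+1 : λ a limit ordinal} belongs to the pleasant closure P(I). Then for every stationary set Q of limit ordinals there exists Y ⊆ L with Y ∈ I such that B(Y) = {α−1 : α ∈ Y} is stationary and B(Y) ⊆ Q. -/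
open Set

namespace PaperIdeals

/-!
Suppose no `Y` works, and let `K` consist of the `X` with `(X ∪ B(X)) ∩ Q` nonstationary.
For `X ∈ I`, the set `X ∩ (Q + 1)` is a subset of `L` in `I` with `B(X ∩ (Q + 1)) = B(X) ∩ Q`,
so `B(X) ∩ Q` is nonstationary, and `X ∩ Q` is nonstationary because `I ⊆ NS_κ`; hence `I ⊆ K`.
Closure of clubs under diagonal intersections makes `K` a pleasant ideal, so `L ∈ P(I) ⊆ K`.
But `B(L) ⊇ Q`, so `Q` would be nonstationary.
-/

section Clubs

open Ordinal Order

variable {κ : Cardinal.{0}}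

theorem iSup_Iio_lt_ord (hreg : κ.IsRegular) {b : Ordinal.{0}} (hb : b < κ.ord)
    {f : Ordinal.{0} → Ordinal.{0}} (hf : ∀ i < b, f i < κ.ord) :
    ⨆ i : Iio b, f i < κ.ord := by
  refine Ordinal.lift_iSup_lt_of_lt_cof ?_ fun i => hf i.1 i.2
  rwa [← lift_cof, hreg.cof_ord, Cardinal.mk_Iio_ordinal, Cardinal.lift_lift, Cardinal.lift_lt,
    ← Cardinal.lt_ord]

theorem exists_closurePoint (hreg : κ.IsRegular) (hunc : Cardinal.aleph0 < κ)
    {g : Ordinal.{0} → Ordinal.{0}} (hg : ∀ β < κ.ord, g β < κ.ord) {α : Ordinal.{0}}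
    (hα : α < κ.ord) :
    ∃ δ, α < δ ∧ δ < κ.ord ∧ IsSuccLimit δ ∧ ∀ β < δ, g β < δ := by
  have hκ : IsSuccLimit κ.ord := Cardinal.isSuccLimit_ord hreg.aleph0_le
  set f : Ordinal.{0} → Ordinal.{0} := fun x => max (x + 1) (⨆ β : Iio x, g β)
  have hf_lt : ∀ x < κ.ord, f x < κ.ord := fun x hx =>
    max_lt (hκ.add_one_lt hx) (iSup_Iio_lt_ord hreg hx fun β hβ => hg β (hβ.trans hx))
  have hlt_f : ∀ x, x < f x := fun x => (lt_add_one x).trans_le (le_max_left _ _)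
  have hg_le : ∀ β x, β < x → g β ≤ f x := fun β x h =>
    (Ordinal.le_iSup (fun b : Iio x => g b) ⟨β, h⟩).trans (le_max_right _ _)
  have hiter_lt : ∀ n, f (f^[n] α) < nfp f α := fun n =>
    (hlt_f _).trans_le <| by
      simpa only [Function.iterate_succ_apply'] using iterate_le_nfp f α (n + 2)
  have hαδ : α < nfp f α := (hlt_f α).trans (hiter_lt 0)
  refine ⟨nfp f α, hαδ, Cardinal.nfp_lt_ord_of_isRegular hreg hunc.ne' hf_lt hα, ?_, ?_⟩
  · refine Ordinal.isSuccLimit_iff.2 ⟨hαδ.ne_bot, isSuccPrelimit_of_succ_lt fun a ha => ?_⟩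
    obtain ⟨n, hn⟩ := lt_nfp_iff.1 ha
    exact (succ_le_of_lt hn).trans_lt ((hlt_f _).trans (hiter_lt n))
  · intro β hβ
    obtain ⟨n, hn⟩ := lt_nfp_iff.1 hβ
    exact (hg_le β _ hn).trans_lt (hiter_lt n)

theorem isClubIn_Iio_ord (hκ : Cardinal.aleph0 ≤ κ) : IsClubIn κ (Iio κ.ord) :=
  ⟨subset_rfl, fun α hα => ⟨α + 1, (Cardinal.isSuccLimit_ord hκ).add_one_lt hα, lt_add_one α⟩,
    fun _ hδ _ _ => hδ⟩

theorem IsClubIn.inter_Ioi {C : Set Ordinal.{0}} (hC : IsClubIn κ C) {θ : Ordinal.{0}}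
    (hθ : θ < κ.ord) : IsClubIn κ (C ∩ Ioi θ) := by
  refine ⟨fun γ hγ => hC.1 hγ.1, fun α hα => ?_, fun δ hδ hlim hcof => ⟨?_, ?_⟩⟩
  · obtain ⟨β, hβC, hβ⟩ := hC.2.1 (max α θ) (max_lt hα hθ)
    exact ⟨β, ⟨hβC, (le_max_right α θ).trans_lt hβ⟩, (le_max_left α θ).trans_lt hβ⟩
  · exact hC.2.2 δ hδ hlim fun a ha => (hcof a ha).imp fun β ⟨hβ, h⟩ => ⟨hβ.1, h⟩
  · obtain ⟨β, ⟨-, hθβ⟩, -, hβδ⟩ := hcof 0 hlim.bot_lt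
    exact hθβ.trans hβδ

theorem isClubIn_diagInter (hreg : κ.IsRegular) (hunc : Cardinal.aleph0 < κ)
    {C : Ordinal.{0} → Set Ordinal.{0}} (hC : ∀ i < κ.ord, IsClubIn κ (C i)) :
    IsClubIn κ {γ | γ < κ.ord ∧ ∀ i < γ, γ ∈ C i} := by
  have hκ : IsSuccLimit κ.ord := Cardinal.isSuccLimit_ord hreg.aleph0_le
  refine ⟨fun γ hγ => hγ.1, fun α hα => ?_, fun δ hδ hlim hcof => ⟨hδ, fun i hi => ?_⟩⟩
  · have hnext : ∀ i β, ∃ x < κ.ord, i < κ.ord → β < κ.ord → x ∈ C i ∧ β < x := by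
      intro i β
      by_cases h : i < κ.ord ∧ β < κ.ord
      · obtain ⟨x, hxC, hβx⟩ := (hC i h.1).2.1 β h.2
        exact ⟨x, (hC i h.1).1 hxC, fun _ _ => ⟨hxC, hβx⟩⟩
      · exact ⟨0, hκ.bot_lt, fun hi hβ => (h ⟨hi, hβ⟩).elim⟩
    choose next hnext_lt hnext using hnext
    obtain ⟨δ, hαδ, hδ, hlim, hclosed⟩ := exists_closurePoint hreg hunc
      (g := fun β => ⨆ i : Iio β, next i β)
      (fun β hβ => iSup_Iio_lt_ord hreg hβ fun i _ => hnext_lt i β) hα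
    refine ⟨δ, ⟨hδ, fun i hi => (hC i (hi.trans hδ)).2.2 δ hδ hlim fun a ha => ?_⟩, hαδ⟩
    -- `next i (max i a + 1)` lies in `C i` between `a` and `δ`, since `δ` is closed under the sup.
    have hb : max i a + 1 < δ := hlim.add_one_lt (max_lt hi ha)
    have hib : i < max i a + 1 := (le_max_left i a).trans_lt (lt_add_one _)
    obtain ⟨hmem, hlt⟩ := hnext i _ (hi.trans hδ) (hb.trans hδ)
    refine ⟨next i _, hmem, (le_max_right i a).trans_lt ((lt_add_one _).trans hlt), ?_⟩
    exact (Ordinal.le_iSup (fun j : Iio _ => next j _) ⟨i, hib⟩).trans_lt (hclosed _ hb)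
  · refine (hC i (hi.trans hδ)).2.2 δ hδ hlim fun a ha => ?_
    obtain ⟨β, ⟨-, hβ⟩, haβ, hβδ⟩ := hcof (max i a) (max_lt hi ha)
    exact ⟨β, hβ i ((le_max_left i a).trans_lt haβ), (le_max_right i a).trans_lt haβ, hβδ⟩

theorem IsClubIn.inter (hreg : κ.IsRegular) (hunc : Cardinal.aleph0 < κ)
    {C₁ C₂ : Set Ordinal.{0}} (h₁ : IsClubIn κ C₁) (h₂ : IsClubIn κ C₂) :
    IsClubIn κ (C₁ ∩ C₂) := by
  have hκ : IsSuccLimit κ.ord := Cardinal.isSuccLimit_ord hreg.aleph0_le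
  have hD := isClubIn_diagInter hreg hunc (C := fun i => if i = 0 then C₁ else C₂)
    fun i _ => by split_ifs <;> assumption
  refine ⟨fun γ hγ => h₁.1 hγ.1, fun α hα => ?_, fun δ hδ hlim hcof =>
    ⟨h₁.2.2 δ hδ hlim fun a ha => (hcof a ha).imp fun β ⟨hβ, h⟩ => ⟨hβ.1, h⟩,
      h₂.2.2 δ hδ hlim fun a ha => (hcof a ha).imp fun β ⟨hβ, h⟩ => ⟨hβ.2, h⟩⟩⟩
  obtain ⟨β, ⟨-, hβ⟩, hαβ⟩ := hD.2.1 (α + 1) (hκ.add_one_lt hα)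
  have h1β : 1 < β := le_add_self.trans_lt hαβ
  exact ⟨β, ⟨by simpa using hβ 0 (zero_lt_one.trans h1β), by simpa using hβ 1 h1β⟩,
    (lt_add_one α).trans hαβ⟩

end Clubs

section Nonstationary

variable {κ : Cardinal.{0}} {X Y : Set Ordinal.{0}}

theorem ns_iff_forall_notMem :
    NS κ X ↔ X ⊆ Iio κ.ord ∧ ∃ C, IsClubIn κ C ∧ ∀ γ ∈ X, γ ∉ C := by
  simp only [NS, ← disjoint_iff_inter_eq_empty, disjoint_left]

theorem NS.mono (hX : NS κ X) (hYX : Y ⊆ X) : NS κ Y :=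
  let ⟨hXκ, C, hC, hXC⟩ := hX
  ⟨hYX.trans hXκ, C, hC, subset_eq_empty (inter_subset_inter_left C hYX) hXC⟩

theorem NS.union (hreg : κ.IsRegular) (hunc : Cardinal.aleph0 < κ) (hX : NS κ X)
    (hY : NS κ Y) : NS κ (X ∪ Y) := by
  obtain ⟨hXκ, C₁, hC₁, hXC⟩ := ns_iff_forall_notMem.1 hX
  obtain ⟨hYκ, C₂, hC₂, hYC⟩ := ns_iff_forall_notMem.1 hY
  exact ns_iff_forall_notMem.2 ⟨union_subset hXκ hYκ, C₁ ∩ C₂, hC₁.inter hreg hunc hC₂,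
    fun γ hγ hγC => hγ.elim (fun h => hXC γ h hγC.1) (fun h => hYC γ h hγC.2)⟩

theorem NS.biUnion (hreg : κ.IsRegular) (hunc : Cardinal.aleph0 < κ) {θ : Ordinal.{0}}
    (hθ : θ < κ.ord) {X : Ordinal.{0} → Set Ordinal.{0}} (hX : ∀ α, NS κ (X α)) :
    NS κ (⋃ α ∈ Iio θ, X α) := by
  choose hXκ C hC hXC using fun α => ns_iff_forall_notMem.1 (hX α)
  refine ns_iff_forall_notMem.2 ⟨iUnion₂_subset fun α _ => hXκ α, _,
    (isClubIn_diagInter hreg hunc fun i _ => hC i).inter_Ioi hθ, fun γ hγ ⟨⟨_, hγC⟩, hθγ⟩ => ?_⟩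
  obtain ⟨α, hαθ, hγα⟩ := mem_iUnion₂.1 hγ
  exact hXC α γ hγα (hγC α (lt_trans hαθ hθγ))

theorem NS.of_bddIn (hκ : Cardinal.aleph0 ≤ κ) (hX : BddIn κ X) : NS κ X := by
  obtain ⟨θ, hθ, hXθ⟩ := hX
  exact ns_iff_forall_notMem.2 ⟨hXθ.trans (Iio_subset_Iio hθ.le), _,
    (isClubIn_Iio_ord hκ).inter_Ioi hθ, fun γ hγ hγC => lt_asymm (hXθ hγ) (mem_Ioi.1 hγC.2)⟩

theorem ns_of_not_statIn (hXκ : X ⊆ Iio κ.ord) (hX : ¬ StatIn κ X) : NS κ X := by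
  simp only [StatIn, hXκ, true_and, not_forall, not_nonempty_iff_eq_empty, exists_prop] at hX
  exact ⟨hXκ, hX⟩

theorem StatIn.not_ns (hX : StatIn κ X) (hXY : X ⊆ Y) : ¬ NS κ Y := fun ⟨_, C, hC, hYC⟩ =>
  (hX.2 C hC).ne_empty (subset_eq_empty (inter_subset_inter_left C hXY) hYC)

end Nonstationary

theorem BSet_union (X Y : Set Ordinal.{0}) : BSet (X ∪ Y) = BSet X ∪ BSet Y := rfl

theorem BSet_mono {X Y : Set Ordinal.{0}} (h : X ⊆ Y) : BSet X ⊆ BSet Y := fun _ hγ => h hγ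

theorem BSet_biUnion (θ : Ordinal.{0}) (X : Ordinal.{0} → Set Ordinal.{0}) :
    BSet (⋃ α ∈ Iio θ, X α) = ⋃ α ∈ Iio θ, BSet (X α) := by
  ext γ
  simp [BSet]

theorem BSet_inter_image_add_one (X Q : Set Ordinal.{0}) :
    BSet (X ∩ (· + 1) '' Q) = BSet X ∩ Q := by
  ext γ
  simp [BSet, Order.add_one_inj]

def NSWithPred (κ : Cardinal.{0}) (Q X : Set Ordinal.{0}) : Prop :=
  X ⊆ Iio κ.ord ∧ NS κ ((X ∪ BSet X) ∩ Q)

section NSWithPred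

variable {κ : Cardinal.{0}} {Q : Set Ordinal.{0}}

theorem isIdeal_nsWithPred (hreg : κ.IsRegular) (hunc : Cardinal.aleph0 < κ) :
    IsIdeal κ (NSWithPred κ Q) := by
  refine ⟨fun X hX => hX.1, fun X Y hX hYX => ?_, fun X Y hX hY => ?_, fun ξ hξ => ?_,
    fun θ hθ X hX => ?_⟩
  · exact ⟨hYX.trans hX.1,
      hX.2.mono (inter_subset_inter_left Q (union_subset_union hYX (BSet_mono hYX)))⟩
  · refine ⟨union_subset hX.1 hY.1, ?_⟩
    rw [BSet_union, union_union_union_comm, union_inter_distrib_right]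
    exact hX.2.union hreg hunc hY.2
  · have hκ : Order.IsSuccLimit κ.ord := Cardinal.isSuccLimit_ord hreg.aleph0_le
    refine ⟨singleton_subset_iff.2 hξ, NS.of_bddIn hreg.aleph0_le
      ⟨ξ + 1, hκ.add_one_lt hξ, fun γ ⟨hγ, _⟩ => ?_⟩⟩
    rcases hγ with rfl | hγ
    · exact lt_add_one γ
    · exact (lt_add_one γ).trans_eq hγ |>.trans (lt_add_one ξ)
  · refine ⟨iUnion₂_subset fun α _ => (hX α).1, ?_⟩
    refine (NS.biUnion hreg hunc (Cardinal.lt_ord.2 hθ) fun α => (hX α).2).mono ?_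
    rw [BSet_biUnion]
    rintro γ ⟨hγ | hγ, hγQ⟩
    · obtain ⟨α, hα, hγα⟩ := mem_iUnion₂.1 hγ
      exact mem_iUnion₂.2 ⟨α, hα, Or.inl hγα, hγQ⟩
    · obtain ⟨α, hα, hγα⟩ := mem_iUnion₂.1 hγ
      exact mem_iUnion₂.2 ⟨α, hα, Or.inr hγα, hγQ⟩

theorem pleasant_nsWithPred (hreg : κ.IsRegular) (hunc : Cardinal.aleph0 < κ) :
    Pleasant (NSWithPred κ Q) := by
  rintro A ⟨-, hA⟩ X hX
  obtain ⟨-, C, hC, hAC⟩ := ns_iff_forall_notMem.1 hA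
  choose _ D hD hXD using fun α => ns_iff_forall_notMem.1 (hX α).2
  refine ⟨fun γ ⟨α, _, _, hγ⟩ => (hX α).1 hγ, ns_iff_forall_notMem.2 ⟨fun γ hγ => ?_, _,
    (isClubIn_diagInter hreg hunc fun i _ => hD i).inter hreg hunc hC, ?_⟩⟩
  · rcases hγ.1 with ⟨α, -, -, h⟩ | ⟨α, -, -, h⟩
    exacts [(hX α).1 h, (lt_add_one γ).trans ((hX α).1 h)]
  · rintro γ ⟨⟨α, hαγ, -, hγX⟩ | ⟨α, hαγ, hαA, hγX⟩, hγQ⟩ ⟨⟨-, hγD⟩, hγC⟩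
    · exact hXD α γ ⟨Or.inl hγX, hγQ⟩ (hγD α hαγ)
    · rcases (Order.lt_add_one_iff.1 hαγ).lt_or_eq with hαγ | rfl
      · exact hXD α γ ⟨Or.inr hγX, hγQ⟩ (hγD α hαγ)
      · exact hAC α ⟨Or.inl hαA, hγQ⟩ hγC

theorem nsWithPred_of_mem {J : Set Ordinal.{0} → Prop} (hreg : κ.IsRegular)
    (hunc : Cardinal.aleph0 < κ) (hJ : IsIdeal κ J) (hsub : ∀ X, J X → NS κ X)
    (hQlim : ∀ γ ∈ Q, Order.IsSuccLimit γ)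
    (hno : ∀ Y ⊆ LSet κ, J Y → StatIn κ (BSet Y) → ¬ BSet Y ⊆ Q)
    {X : Set Ordinal.{0}} (hX : J X) : NSWithPred κ Q X := by
  have hXκ : X ⊆ Iio κ.ord := hJ.1 X hX
  have hY : ¬ StatIn κ (BSet X ∩ Q) := by
    rw [← BSet_inter_image_add_one]
    refine fun hstat => hno _ ?_ (hJ.2.1 X _ hX inter_subset_left) hstat
      (BSet_inter_image_add_one X Q ▸ inter_subset_right)
    rintro _ ⟨hγX, γ, hγQ, rfl⟩
    exact ⟨γ, hQlim γ hγQ, rfl, hXκ hγX⟩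
  refine ⟨hXκ, ?_⟩
  rw [union_inter_distrib_right]
  exact ((hsub X hX).mono inter_subset_left).union hreg hunc
    (ns_of_not_statIn (fun γ hγ => (lt_add_one γ).trans (hXκ hγ.1)) hY)

theorem not_nsWithPred_LSet (hκ : Cardinal.aleph0 ≤ κ) (hQ : StatIn κ Q)
    (hQlim : ∀ γ ∈ Q, Order.IsSuccLimit γ) : ¬ NSWithPred κ Q (LSet κ) := by
  refine fun h => hQ.not_ns (fun γ hγ => ?_) h.2
  exact ⟨Or.inr ⟨γ, hQlim γ hγ, rfl, (Cardinal.isSuccLimit_ord hκ).add_one_lt (hQ.1 hγ)⟩, hγ⟩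

end NSWithPred

/-- If `I ⊆ NS κ` and `L ∈ P(I)`, then for every stationary set `Q` of limit
ordinals there is `Y ⊆ L` with `Y ∈ I`, `B(Y)` stationary and `B(Y) ⊆ Q`. -/
theorem stmt16 (κ : Cardinal.{0}) (hreg : κ.IsRegular) (hunc : Cardinal.aleph0 < κ)
    (J : Set Ordinal.{0} → Prop) (hJ : IsIdeal κ J) (hsub : ∀ X, J X → NS κ X)
    (hL : PClosure κ J (LSet κ))
    (Q : Set Ordinal.{0}) (hQstat : StatIn κ Q) (hQlim : ∀ α ∈ Q, Order.IsSuccLimit α) :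
    ∃ Y, Y ⊆ LSet κ ∧ J Y ∧ StatIn κ (BSet Y) ∧ BSet Y ⊆ Q := by
  by_contra! hno
  refine not_nsWithPred_LSet hreg.aleph0_le hQstat hQlim <|
    hL _ (isIdeal_nsWithPred hreg hunc) (pleasant_nsWithPred hreg hunc) fun X hX => ?_
  exact nsWithPred_of_mem hreg hunc hJ hsub hQlim hno hX

end PaperIdeals
end
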